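/- Let (W,S) be a Coxeter system, x ∈ W, and suppose x = ⋁Y for some Y ⊆ W (join in right weak order). Then for every α ∈ Φ¹(x) there exists y ∈ Y with α ∈ Φ¹(y). -/

import Mathlib

open CoxeterSystem

variable {B W : Type*} [Group W] {M : CoxeterMatrix B}

namespace CoxeterSystem

variable (cs : CoxeterSystem M W)

/-- The left inversion set `Φ(w)`, with positive roots identified with reflections. -/
def invSet (w : W) : Set W := {t | cs.IsLeftInversion w t}

/-- The short inversions `Φ¹(w) = {α ∈ Φ(w) : ℓ(s_α w) = ℓ(w) − 1}`. -/
def shortInv (w : W) : Set W :=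
  {t | cs.IsReflection t ∧ cs.length (t * w) + 1 = cs.length w}

/-- The right weak order: `x ⪯ y` iff `ℓ(y) = ℓ(x) + ℓ(x⁻¹y)`. -/
def rle (x y : W) : Prop := cs.length y = cs.length x + cs.length (x⁻¹ * y)

/-- The right-descent roots `Φ^R(w) = {−wα_s : s ∈ D_R(w)}`, as reflections `w s w⁻¹`. -/
def rdRoots (w : W) : Set W :=
  {t | ∃ i, cs.IsRightDescent w i ∧ t = w * cs.simple i * w⁻¹}

/-- The negative half-space `H_α⁻` of a positive root (reflection) `t`. -/
def hsNeg (t : W) : Set W := {w | cs.length (t * w) < cs.length w}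

/-- The positive half-space `H_α⁺` of a positive root (reflection) `t`. -/
def hsPos (t : W) : Set W := {w | cs.length w < cs.length (t * w)}

/-- A subset of `W` is convex if it contains every geodesic between two of its elements. -/
def IsConvexSet (A : Set W) : Prop :=
  ∀ u ∈ A, ∀ v ∈ A, ∀ ω : List B, cs.IsReduced ω → cs.wordProd ω = u⁻¹ * v →
    ∀ j : ℕ, u * cs.wordProd (ω.take j) ∈ A

/-- `z` is the join (least upper bound) of `X` in the right weak order. -/
def IsJoin (X : Set W) (z : W) : Prop :=
  (∀ x ∈ X, cs.rle x z) ∧ ∀ u : W, (∀ x ∈ X, cs.rle x u) → cs.rle z u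

/-- `y` is a suffix of `x`. -/
def IsSuffix (y x : W) : Prop := cs.length x = cs.length (x * y⁻¹) + cs.length y

/-- A Garside shadow: contains the simple reflections, closed under joins in the right
weak order, and closed under suffixes. -/
def IsGarsideShadow (G : Set W) : Prop :=
  (∀ i : B, cs.simple i ∈ G) ∧
  (∀ X ⊆ G, ∀ z : W, cs.IsJoin X z → z ∈ G) ∧
  (∀ x ∈ G, ∀ y : W, cs.IsSuffix y x → y ∈ G)

/-- The cone type `T(w) = {v : ℓ(wv) = ℓ(w) + ℓ(v)}`. -/
def coneType (w : W) : Set W := {v | cs.length (w * v) = cs.length w + cs.length v}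

/-- The boundary roots of the cone type `T(w⁻¹)`. -/
def bdRoots (w : W) : Set W :=
  {t | cs.IsReflection t ∧ ∃ z : W, cs.invSet w ∩ cs.invSet z = {t}}

/-- The alternating word `[i, i']_n = i i' i i' ⋯` of length `n`, starting with `i`. -/
def altWord (i i' : B) (n : ℕ) : List B := (alternatingWord i' i n).reverse

end CoxeterSystem

namespace CoxeterSystem

open List
open scoped Classical

set_option linter.unusedSectionVars false

variable (cs : CoxeterSystem M W)

local prefix:100 "s" => cs.simple
local prefix:100 "π" => cs.wordProd
local prefix:100 "ℓ" => cs.length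
local prefix:100 "ris" => cs.rightInvSeq
local prefix:100 "lis" => cs.leftInvSeq

/-! ### The sign representation on reflections (Bjorner–Brenti) -/

noncomputable def sgnFun (i : B) : W × ℤˣ → W × ℤˣ :=
  fun p => (s i * p.1 * s i, if p.1 = s i then -p.2 else p.2)

theorem sgnFun_invol (i : B) : Function.Involutive (cs.sgnFun i) := by
  intro ⟨t, ε⟩
  simp only [sgnFun]
  have h1 : s i * (s i * t * s i) * s i = t := by
    simp only [← mul_assoc, cs.simple_mul_simple_self, one_mul]
    exact cs.simple_mul_simple_cancel_right i
  have h2 : (s i * t * s i = s i) ↔ (t = s i) := by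
    constructor
    · intro h
      have h' : s i * (t * s i) = s i * 1 := by rw [mul_one, ← mul_assoc]; exact h
      have h'' := mul_left_cancel h'
      rw [mul_eq_one_iff_eq_inv] at h''
      rw [h'', cs.inv_simple]
    · rintro rfl; rw [cs.simple_mul_simple_cancel_right]
  by_cases h : t = s i <;> simp [h, h1, h2]

noncomputable def sgnPerm (i : B) : Equiv.Perm (W × ℤˣ) := (cs.sgnFun_invol i).toPerm

theorem sgnPerm_apply (i : B) (t : W) (ε : ℤˣ) :
    cs.sgnPerm i (t, ε) = (s i * t * s i, if t = s i then -ε else ε) := rfl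

/-- The sign `(-1)^{number of occurrences of t in l}`. -/
noncomputable def refSgn (t : W) : List W → ℤˣ
  | [] => 1
  | a :: l => (if a = t then -1 else 1) * refSgn t l

@[simp] theorem refSgn_nil (t : W) : refSgn t ([] : List W) = 1 := rfl

theorem refSgn_cons (t a : W) (l : List W) :
    refSgn t (a :: l) = (if a = t then -1 else 1) * refSgn t l := rfl

theorem refSgn_append (t : W) (l₁ l₂ : List W) :
    refSgn t (l₁ ++ l₂) = refSgn t l₁ * refSgn t l₂ := by
  induction l₁ with
  | nil => simp
  | cons a l ih => simp [refSgn_cons, ih, mul_assoc]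

theorem refSgn_eq_one_of_not_mem {t : W} {l : List W} (h : t ∉ l) : refSgn t l = 1 := by
  induction l with
  | nil => rfl
  | cons a l ih =>
    simp only [mem_cons, not_or] at h
    rw [refSgn_cons, if_neg (fun ha => h.1 ha.symm), one_mul]
    exact ih h.2

theorem mem_of_refSgn_ne_one {t : W} {l : List W} (h : refSgn t l ≠ 1) : t ∈ l := by
  by_contra hm; exact h (refSgn_eq_one_of_not_mem hm)

theorem refSgn_map_of_injective {t : W} {l : List W} {f : W → W} (hf : Function.Injective f)
    (t' : W) (ht' : f t' = t) : refSgn t (l.map f) = refSgn t' l := by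
  induction l with
  | nil => rfl
  | cons a l ih =>
    rw [map_cons, refSgn_cons, refSgn_cons, ih]
    congr 1
    by_cases h : a = t'
    · rw [if_pos h, if_pos (by rw [h, ht'])]
    · rw [if_neg h, if_neg (fun hh => h (hf (by rw [hh, ht'])))]

/-- Word action: product of the sign permutations along a word. -/
noncomputable def sgnWord (ω : List B) : Equiv.Perm (W × ℤˣ) :=
  (ω.map (cs.sgnPerm)).prod

@[simp] theorem sgnWord_nil : cs.sgnWord ([] : List B) = 1 := rfl

theorem sgnWord_cons (i : B) (ω : List B) :
    cs.sgnWord (i :: ω) = cs.sgnPerm i * cs.sgnWord ω := by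
  simp [sgnWord]

theorem rightInvSeq_cons (i : B) (ω : List B) :
    ris (i :: ω) = ((π ω)⁻¹ * s i * π ω) :: ris ω := rfl

/-- The key sign formula. -/
theorem sgnWord_apply (ω : List B) (t : W) (ε : ℤˣ) :
    cs.sgnWord ω (t, ε) = (π ω * t * (π ω)⁻¹, refSgn t (ris ω) * ε) := by
  induction ω generalizing ε with
  | nil => simp
  | cons i ω ih =>
    rw [sgnWord_cons, Equiv.Perm.mul_apply, ih, sgnPerm_apply, rightInvSeq_cons, refSgn_cons,
      wordProd_cons, Prod.mk.injEq]
    constructor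
    · simp [mul_inv_rev, cs.inv_simple, mul_assoc]
    · have : (π ω * t * (π ω)⁻¹ = s i) ↔ ((π ω)⁻¹ * s i * π ω = t) := by
        constructor
        · intro h; rw [← h]; group
        · intro h; rw [← h]; group
      by_cases h : (π ω)⁻¹ * s i * π ω = t
      · rw [if_pos (this.mpr h), if_pos h]; simp [mul_assoc]
      · rw [if_neg (fun hh => h (this.mp hh)), if_neg h, one_mul]

/-! ### The braid relation for the sign permutations -/

theorem altWord_split (i j : B) (q : ℕ) : ∀ m : ℕ,
    alternatingWord i j (q + m) =
      (if Even q then alternatingWord i j m else alternatingWord j i m) ++ alternatingWord i j q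
  | 0 => by simp [alternatingWord]
  | m + 1 => by
    have ih := altWord_split i j q m
    rw [show q + (m + 1) = (q + m) + 1 from rfl, alternatingWord_succ' i j (q + m), ih,
      alternatingWord_succ' i j m, alternatingWord_succ' j i m]
    by_cases hq : Even q
    · have hqm : Even (q + m) ↔ Even m := by
        rw [Nat.even_add]; tauto
      by_cases hm : Even m <;>
        simp [hq, hm, hqm.mpr, if_pos, if_neg, cons_append] <;> simp [hqm, hm]
    · have hqm : Even (q + m) ↔ ¬ Even m := by
        rw [Nat.even_add]; tauto
      by_cases hm : Even m <;>
        simp [hq, hm, cons_append] <;> simp [hqm, hm]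

theorem wordProd_altWord_split (i j : B) (q m : ℕ) :
    π (alternatingWord i j (q + m)) =
      (if Even q then π (alternatingWord i j m) else π (alternatingWord j i m)) *
        π (alternatingWord i j q) := by
  rw [altWord_split i j q m]
  by_cases hq : Even q <;> simp [hq, wordProd_append]

/-- The `q`-th entry (from the right) of the right inversion sequence of an
alternating word. -/
noncomputable def altEntry (i j : B) (q : ℕ) : W :=
  (π (alternatingWord i j q))⁻¹ * π (alternatingWord i j (q + 1))

theorem ris_altWord (i j : B) : ∀ n : ℕ,
    ris (alternatingWord i j n) = ((range n).reverse).map (cs.altEntry i j)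
  | 0 => by simp [alternatingWord]
  | n + 1 => by
    rw [alternatingWord_succ' i j n, rightInvSeq_cons, ris_altWord i j n, range_succ,
      reverse_append]
    simp only [reverse_cons, reverse_nil, nil_append, singleton_append, map_cons]
    congr 1
    rw [altEntry, alternatingWord_succ' i j n, wordProd_cons, mul_assoc]

theorem altEntry_add_M (i j : B) (hM : M i j ≠ 0) (q : ℕ) :
    cs.altEntry i j (q + M i j) = cs.altEntry i j q := by
  have hZ : π (alternatingWord j i (M i j)) = π (alternatingWord i j (M i j)) := by
    have h := cs.prod_alternatingWord_eq_prod_alternatingWord_sub j i (M i j)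
      (by rw [M.symmetric j i]; omega)
    rw [h, M.symmetric j i, show M i j * 2 - M i j = M i j by omega]
  have key : ∀ p : ℕ, π (alternatingWord i j (p + M i j)) =
      π (alternatingWord i j (M i j)) * π (alternatingWord i j p) := by
    intro p
    rw [cs.wordProd_altWord_split i j p (M i j)]
    by_cases hp : Even p <;> simp [hp, hZ]
  rw [altEntry, altEntry, show q + M i j + 1 = (q + 1) + M i j by omega, key, key,
    mul_inv_rev]
  group

theorem sgnWord_altWord (i j : B) : ∀ m : ℕ,
    cs.sgnWord (alternatingWord i j (2 * m)) = (cs.sgnPerm i * cs.sgnPerm j) ^ m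
  | 0 => by simp [alternatingWord]
  | m + 1 => by
    have h2 : 2 * (m + 1) = (2 * m) + 1 + 1 := by omega
    rw [h2, alternatingWord_succ' i j, alternatingWord_succ' i j]
    simp only [Nat.even_add_one, Nat.even_mul, even_two, true_or, not_true_eq_false,
      if_false, if_true]
    rw [sgnWord_cons, sgnWord_cons, sgnWord_altWord i j m, pow_succ']
    rw [mul_assoc]

theorem sgnPerm_liftable : CoxeterMatrix.IsLiftable M (cs.sgnPerm) := by
  intro i j
  by_cases hM : M i j = 0
  · rw [hM, pow_zero]
  · rw [← cs.sgnWord_altWord i j (M i j)]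
    apply Equiv.ext
    rintro ⟨t, ε⟩
    rw [cs.sgnWord_apply]
    have hπ : π (alternatingWord i j (2 * M i j)) = 1 := by
      rw [cs.prod_alternatingWord_eq_mul_pow]
      simp [Nat.mul_div_cancel_left, cs.simple_mul_simple_pow i j]
    have hsgn : refSgn t (ris (alternatingWord i j (2 * M i j))) = 1 := by
      rw [cs.ris_altWord, show 2 * M i j = M i j + M i j by omega, range_add,
        reverse_append, map_append, refSgn_append, ← map_reverse, map_map]
      have : (cs.altEntry i j) ∘ (fun x => M i j + x) = cs.altEntry i j := by
        funext q
        simp only [Function.comp_apply]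
        rw [show M i j + q = q + M i j by omega, cs.altEntry_add_M i j hM]
      rw [this]
      exact Int.units_mul_self _
    rw [hπ, hsgn]
    simp

/-! ### The sign homomorphism and the strong exchange property -/

noncomputable def sgnHom : W →* Equiv.Perm (W × ℤˣ) :=
  cs.lift ⟨cs.sgnPerm, cs.sgnPerm_liftable⟩

theorem sgnHom_wordProd (ω : List B) : cs.sgnHom (π ω) = cs.sgnWord ω := by
  induction ω with
  | nil => simp [wordProd_nil]
  | cons i ω ih =>
    rw [wordProd_cons, map_mul, ih, sgnWord_cons, sgnHom, cs.lift_apply_simple]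

/-- The parity of the number of occurrences of `t` in the right inversion sequence
depends only on the product of the word. -/
theorem refSgn_ris_eq (ω ω' : List B) (hp : π ω = π ω') (t : W) :
    refSgn t (ris ω) = refSgn t (ris ω') := by
  have h := congrArg (fun (e : Equiv.Perm (W × ℤˣ)) => e (t, 1))
    (hp ▸ rfl : cs.sgnHom (π ω) = cs.sgnHom (π ω'))
  rw [cs.sgnHom_wordProd, cs.sgnHom_wordProd] at h
  simp only [cs.sgnWord_apply, Prod.mk.injEq] at h
  simpa using h.2

theorem rightInvSeq_append (ω₁ ω₂ : List B) :
    ris (ω₁ ++ ω₂) = (ris ω₁).map (fun x => (π ω₂)⁻¹ * x * π ω₂) ++ ris ω₂ := by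
  induction ω₁ with
  | nil => simp
  | cons i ω₁ ih =>
    rw [cons_append, rightInvSeq_cons, rightInvSeq_cons, ih, wordProd_append, map_cons,
      cons_append]
    congr 1
    group

/-- For a reflection `t` presented by a palindromic word, the sign is `-1`. -/
theorem refSgn_palindrome : ∀ (β : List B) (i : B),
    refSgn (π β * s i * (π β)⁻¹) (ris (β ++ [i] ++ β.reverse)) = -1
  | [], i => by simp [rightInvSeq_cons, refSgn_cons]
  | j :: γ, i => by
    have ih := refSgn_palindrome γ i
    set t' := π γ * s i * (π γ)⁻¹ with ht'
    have ht'refl : cs.IsReflection t' := ⟨π γ, i, rfl⟩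
    have hlist : (j :: γ) ++ [i] ++ (j :: γ).reverse
        = j :: ((γ ++ [i] ++ γ.reverse) ++ [j]) := by simp
    have hπα' : π (γ ++ [i] ++ γ.reverse) = t' := by
      rw [wordProd_append, wordProd_append, wordProd_reverse, wordProd_singleton, ht', mul_assoc]
    have hπ : π ((γ ++ [i] ++ γ.reverse) ++ [j]) = t' * s j := by
      rw [wordProd_append, hπα', wordProd_singleton]
    have ht : π (j :: γ) * s i * (π (j :: γ))⁻¹ = s j * t' * s j := by
      rw [wordProd_cons, mul_inv_rev, cs.inv_simple, ht']; group
    rw [hlist, ht, rightInvSeq_cons, hπ]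
    rw [show (γ ++ [i] ++ γ.reverse) ++ [j] = (γ ++ [i] ++ γ.reverse).concat j from
      concat_eq_append.symm, cs.rightInvSeq_concat]
    rw [refSgn_cons, concat_eq_append, refSgn_append]
    have hmap : refSgn (s j * t' * s j) ((ris (γ ++ [i] ++ γ.reverse)).map
        (⇑(MulAut.conj (s j)))) = -1 := by
      rw [refSgn_map_of_injective (MulAut.conj (s j)).injective t'
        (by simp [MulAut.conj_apply, cs.inv_simple])]
      exact ih
    rw [hmap, refSgn_cons, refSgn_nil]
    -- remaining : head sign * (-1 * (sign at [s j] * 1)) = -1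
    by_cases hcase : t' = s j
    · rw [hcase]
      rw [if_pos (by rw [mul_inv_rev, cs.inv_simple]; simp [cs.simple_mul_simple_self, cs.simple_mul_simple_cancel_right])]
      rw [if_pos (by rw [cs.simple_mul_simple_cancel_right])]
      norm_num
    · have hB : ¬ (s j = s j * t' * s j) := by
        intro hh
        apply hcase
        rw [mul_assoc] at hh
        have h1 : t' * s j = 1 := (left_eq_mul.mp hh)
        rw [eq_inv_of_mul_eq_one_left h1, cs.inv_simple]
      have hA : ¬ ((t' * s j)⁻¹ * s j * (t' * s j) = s j * t' * s j) := by
        intro hh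
        apply hcase
        have h2 : s j * (t' * s j) = (t' * s j) * (s j * (t' * s j)) := by
          calc s j * (t' * s j)
              = (t' * s j) * ((t' * s j)⁻¹ * s j * (t' * s j)) := by group
            _ = (t' * s j) * (s j * t' * s j) := by rw [hh]
            _ = (t' * s j) * (s j * (t' * s j)) := by group
        have h3 : t' * s j = 1 := right_eq_mul.mp h2
        rw [eq_inv_of_mul_eq_one_left h3, cs.inv_simple]
      rw [if_neg hA, if_neg hB]
      norm_num

/-- **Strong exchange property** (right version). -/
theorem strongExchange_right {ω : List B} (hω : cs.IsReduced ω) {t : W}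
    (ht : cs.IsRightInversion (π ω) t) : t ∈ ris ω := by
  obtain ⟨htr, hlt⟩ := ht
  obtain ⟨u, i, htu⟩ := htr
  obtain ⟨β, hβred, hβ⟩ := cs.exists_reduced_word' u
  have ht2 : π β * s i * (π β)⁻¹ = t := by rw [← hβ, ← htu]
  have htrefl : cs.IsReflection t := ⟨u, i, htu⟩
  obtain ⟨ρ, hρred, hρ⟩ := cs.exists_reduced_word' (π ω * t)
  set α : List B := β ++ [i] ++ β.reverse with hα
  have hπα : π α = t := by
    rw [hα, wordProd_append, wordProd_append, wordProd_reverse, wordProd_singleton, mul_assoc,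
      ← mul_assoc, ht2]
  have hp : π ω = π (ρ ++ α) := by
    rw [wordProd_append, hπα, ← hρ, mul_assoc, htrefl.mul_self, mul_one]
  have hsgn := cs.refSgn_ris_eq ω (ρ ++ α) hp t
  rw [cs.rightInvSeq_append, refSgn_append] at hsgn
  have hinj : Function.Injective (fun x : W => (π α)⁻¹ * x * π α) := by
    intro a b hab
    simp only [] at hab
    rw [mul_assoc, mul_assoc] at hab
    have := mul_right_cancel (mul_left_cancel hab)
    exact this
  have hmap : refSgn t ((ris ρ).map (fun x => (π α)⁻¹ * x * π α)) = refSgn t (ris ρ) :=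
    refSgn_map_of_injective hinj t (by rw [hπα]; simp)
  have hnotmem : t ∉ ris ρ := by
    intro hmem
    have := cs.isRightInversion_of_mem_rightInvSeq hρred hmem
    rw [← hρ] at this
    obtain ⟨-, hlt'⟩ := this
    rw [mul_assoc, htrefl.mul_self, mul_one] at hlt'
    omega
  have hpal : refSgn t (ris α) = -1 := by
    rw [← ht2]
    exact cs.refSgn_palindrome β i
  rw [hmap, refSgn_eq_one_of_not_mem hnotmem, one_mul, hpal] at hsgn
  exact mem_of_refSgn_ne_one (by rw [hsgn]; decide)

/-- **Strong exchange property** (left version). -/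
theorem strongExchange_left {ω : List B} (hω : cs.IsReduced ω) {t : W}
    (ht : cs.IsLeftInversion (π ω) t) : t ∈ lis ω := by
  have h1 : cs.IsRightInversion (π ω.reverse) t := by
    rw [wordProd_reverse]
    exact cs.isRightInversion_inv_iff.mpr ht
  have h2 := cs.strongExchange_right ((cs.isReduced_reverse_iff ω).mpr hω) h1
  rw [cs.rightInvSeq_reverse, mem_reverse] at h2
  exact h2

theorem exists_eraseIdx_of_isLeftInversion {ω : List B} (hω : cs.IsReduced ω) {t : W}
    (ht : cs.IsLeftInversion (π ω) t) : ∃ j < ω.length, t * π ω = π (ω.eraseIdx j) := by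
  have hm := cs.strongExchange_left hω ht
  rw [List.mem_iff_getElem] at hm
  obtain ⟨j, hj, hget⟩ := hm
  rw [cs.length_leftInvSeq] at hj
  refine ⟨j, hj, ?_⟩
  rw [← cs.getD_leftInvSeq_mul_wordProd ω j]
  congr 1
  rw [List.getD_eq_getElem _ _ (by rw [cs.length_leftInvSeq]; exact hj), hget]

/-- Generalized lifting: if `ℓ(tx) = ℓ(x) - 1`, `y ≤ x` in right weak order, and `t` is not
a short inversion of `y`, then `y ≤ tx` in right weak order. -/
theorem length_eq_add_of_short {t x y : W} (htr : cs.IsReflection t)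
    (hx : ℓ (t * x) + 1 = ℓ x) (hyx : ℓ x = ℓ y + ℓ (y⁻¹ * x))
    (hy : ℓ (t * y) + 1 ≠ ℓ y) :
    ℓ (t * x) = ℓ y + ℓ (y⁻¹ * (t * x)) := by
  obtain ⟨ω₁, hl1, hw1⟩ := cs.exists_reduced_word y
  replace hl1 : ω₁.length = ℓ y := by rw [hw1]; exact hl1.symm
  obtain ⟨ω₂, hl2, hw2⟩ := cs.exists_reduced_word (y⁻¹ * x)
  replace hl2 : ω₂.length = ℓ (y⁻¹ * x) := by rw [hw2]; exact hl2.symm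
  have hπ : π (ω₁ ++ ω₂) = x := by
    rw [wordProd_append, ← hw1, ← hw2, mul_inv_cancel_left]
  have hlen : (ω₁ ++ ω₂).length = ℓ x := by
    rw [length_append, hl1, hl2, hyx]
  have hred : cs.IsReduced (ω₁ ++ ω₂) := by
    unfold IsReduced
    rw [hπ, hlen]
  have hinv : cs.IsLeftInversion (π (ω₁ ++ ω₂)) t := ⟨htr, by rw [hπ]; omega⟩
  obtain ⟨j, hj, herase⟩ := cs.exists_eraseIdx_of_isLeftInversion hred hinv
  rw [hπ] at herase
  rw [length_append] at hj
  by_cases hcase : j < ω₁.length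
  · exfalso
    rw [eraseIdx_append_of_lt_length hcase ω₂, wordProd_append] at herase
    have hxe : x = y * π ω₂ := by rw [← hw2, mul_inv_cancel_left]
    have hty : t * y = π (ω₁.eraseIdx j) := by
      rw [hxe, ← mul_assoc] at herase
      exact mul_right_cancel herase
    have h1 : ℓ (t * y) ≤ ω₁.length - 1 := by
      calc ℓ (t * y) = ℓ (π (ω₁.eraseIdx j)) := by rw [hty]
        _ ≤ (ω₁.eraseIdx j).length := cs.length_wordProd_le _
        _ = ω₁.length - 1 := by rw [length_eraseIdx_of_lt hcase]
    have h2 : ℓ (t * x) ≤ ℓ (t * y) + ℓ (y⁻¹ * x) := by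
      have he : t * x = (t * y) * (y⁻¹ * x) := by group
      rw [he]
      exact cs.length_mul_le _ _
    omega
  · push_neg at hcase
    have hj2 : j - ω₁.length < ω₂.length := by omega
    rw [eraseIdx_append_of_length_le hcase ω₂, wordProd_append, ← hw1] at herase
    have h3 : ℓ (y⁻¹ * (t * x)) ≤ ℓ (y⁻¹ * x) - 1 := by
      have he : y⁻¹ * (t * x) = π (ω₂.eraseIdx (j - ω₁.length)) := by
        rw [herase]; group
      calc ℓ (y⁻¹ * (t * x)) = ℓ (π (ω₂.eraseIdx (j - ω₁.length))) := by rw [he]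
        _ ≤ (ω₂.eraseIdx (j - ω₁.length)).length := cs.length_wordProd_le _
        _ = ω₂.length - 1 := by rw [length_eraseIdx_of_lt hj2]
        _ = ℓ (y⁻¹ * x) - 1 := by rw [hl2]
    have h4 : ℓ (t * x) ≤ ℓ y + ℓ (y⁻¹ * (t * x)) := by
      have he : t * x = y * (y⁻¹ * (t * x)) := by group
      nth_rewrite 1 [he]
      exact cs.length_mul_le _ _
    omega

end CoxeterSystem


/-- If `x = ⋁Y` in the right weak order, then every short inversion of `x` is a short
inversion of some `y ∈ Y`. -/
theorem shortInv_join_refines (cs : CoxeterSystem M W) (x : W) (Y : Set W)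
    (h : cs.IsJoin Y x) :
    ∀ α ∈ cs.shortInv x, ∃ y ∈ Y, α ∈ cs.shortInv y := by
  intro α hα
  obtain ⟨hrefl, hlen⟩ := hα
  by_contra hcon
  push_neg at hcon
  have hub : ∀ y ∈ Y, cs.rle y (α * x) := by
    intro y hy
    have hns : cs.length (α * y) + 1 ≠ cs.length y := fun hh => hcon y hy ⟨hrefl, hh⟩
    exact cs.length_eq_add_of_short hrefl hlen (h.1 y hy) hns
  have hx' : cs.length (α * x) = cs.length x + cs.length (x⁻¹ * (α * x)) := h.2 (α * x) hub
  omega
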